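/- Let n, m ∈ ℕ with n ≥ 1, and let a, μ > 0. There exists Γ > 0, depending only on n, m, a and μ, with the following property: for every A ∈ ℝ^{n×n} and B ∈ ℝ^{n×m} with ‖A‖₂ ≤ a, ‖B‖₂ ≤ a, and σ_min([B, AB, …, A^{n−1}B]) ≥ μ, every e ∈ ℝⁿ, every steady state pair (xˢ,uˢ) ∈ ℝⁿ×ℝᵐ with xˢ = A·xˢ + B·uˢ + e, and every initial condition x₀ ∈ ℝⁿ, there exist inputs û₀, …, û_{n−1} ∈ ℝᵐ such that the trajectory defined by x̂₀ = x₀ and x̂_{k+1} = A·x̂_k + B·û_k + e satisfies x̂_n = xˢ and Σ_{k=0}^{n−1}(‖x̂_k − xˢ‖₂ + ‖û_k − uˢ‖₂) ≤ Γ‖xˢ − x₀‖₂. -/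

import Mathlib

open Matrix

noncomputable section

/-- Euclidean norm on `Fin k → ℝ`. -/
def en {k : ℕ} (x : Fin k → ℝ) : ℝ := Real.sqrt (∑ i, x i ^ 2)

/-!
Write `y_k = x̂_k - xˢ` and `v_k = û_k - uˢ`; the steady-state equation turns the dynamics into
`y_{k+1} = A y_k + B v_k`, so `y_n = Aⁿ y₀ + ∑_{j<n} A^j B v_{n-1-j}`. Steering to `xˢ` means
writing `z = -Aⁿ y₀` as `∑_j A^j B c_j`. The controllability Gramian `G = ∑_j (A^j B)(A^j B)ᵀ`
satisfies `wᵀ G w ≥ μ² ‖w‖²`, so it is invertible, and the minimum-norm choice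
`c_j = (A^j B)ᵀ G⁻¹ z` has `‖c_j‖ ≤ ‖z‖ / μ ≤ aⁿ ‖y₀‖ / μ`. A discrete Grönwall estimate then
bounds every `‖y_k‖` by a multiple of `‖y₀‖` depending only on `n`, `a` and `μ`.
-/

section EuclideanNorm

variable {k : ℕ}

lemma en_eq_norm (x : Fin k → ℝ) : en x = ‖WithLp.toLp 2 x‖ := by
  simp [EuclideanSpace.norm_eq, en, sq_abs]

lemma en_nonneg (x : Fin k → ℝ) : 0 ≤ en x := Real.sqrt_nonneg _

lemma en_eq_zero {x : Fin k → ℝ} : en x = 0 ↔ x = 0 := by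
  rw [en_eq_norm, norm_eq_zero, WithLp.toLp_eq_zero]

lemma en_add_le (x y : Fin k → ℝ) : en (x + y) ≤ en x + en y := by
  simpa only [en_eq_norm, WithLp.toLp_add] using norm_add_le _ _

lemma en_sub_comm (x y : Fin k → ℝ) : en (x - y) = en (y - x) := by
  simpa only [en_eq_norm, WithLp.toLp_sub] using norm_sub_rev _ _

lemma en_neg (x : Fin k → ℝ) : en (-x) = en x := by
  simpa only [en_eq_norm, WithLp.toLp_neg] using norm_neg _

lemma dotProduct_self_eq_en_sq (x : Fin k → ℝ) : x ⬝ᵥ x = en x ^ 2 := by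
  rw [en, Real.sq_sqrt (by positivity)]
  simp only [dotProduct, sq]

lemma dotProduct_le_en_mul_en (x y : Fin k → ℝ) : x ⬝ᵥ y ≤ en x * en y :=
  Real.sum_mul_le_sqrt_mul_sqrt Finset.univ x y

lemma en_le_sqrt_sum_sq {ι : Type*} {s : Finset ι} {i : ι} (hi : i ∈ s)
    (x : ι → Fin k → ℝ) : en (x i) ≤ Real.sqrt (∑ j ∈ s, en (x j) ^ 2) := by
  rw [← Real.sqrt_sq (en_nonneg (x i))]
  exact Real.sqrt_le_sqrt (Finset.single_le_sum (fun j _ => sq_nonneg (en (x j))) hi)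

lemma en_pow_mulVec_le {A : Matrix (Fin k) (Fin k) ℝ} {a : ℝ} (ha : 0 ≤ a)
    (hA : ∀ v, en (A *ᵥ v) ≤ a * en v) (j : ℕ) (v : Fin k → ℝ) :
    en ((A ^ j) *ᵥ v) ≤ a ^ j * en v := by
  induction j generalizing v with
  | zero => simp
  | succ j ih =>
    calc en ((A ^ (j + 1)) *ᵥ v) = en ((A ^ j) *ᵥ (A *ᵥ v)) := by
          rw [mulVec_mulVec, pow_succ]
      _ ≤ a ^ j * (a * en v) := (ih _).trans (by gcongr; exact hA v)
      _ = a ^ (j + 1) * en v := by ring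

end EuclideanNorm

section Gramian

variable {n m : ℕ}

def gramian (M : ℕ → Matrix (Fin n) (Fin m) ℝ) (N : ℕ) : Matrix (Fin n) (Fin n) ℝ :=
  ∑ k ∈ Finset.range N, M k * (M k)ᵀ

lemma gramian_mulVec (M : ℕ → Matrix (Fin n) (Fin m) ℝ) (N : ℕ) (w : Fin n → ℝ) :
    gramian M N *ᵥ w = ∑ k ∈ Finset.range N, M k *ᵥ ((M k)ᵀ *ᵥ w) := by
  simp only [gramian, sum_mulVec, mulVec_mulVec]

lemma dotProduct_gramian_mulVec (M : ℕ → Matrix (Fin n) (Fin m) ℝ) (N : ℕ) (w : Fin n → ℝ) :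
    w ⬝ᵥ gramian M N *ᵥ w = ∑ k ∈ Finset.range N, en ((M k)ᵀ *ᵥ w) ^ 2 := by
  rw [gramian_mulVec, dotProduct_sum]
  refine Finset.sum_congr rfl fun k _ => ?_
  rw [dotProduct_mulVec, ← mulVec_transpose, dotProduct_self_eq_en_sq]

variable {M : ℕ → Matrix (Fin n) (Fin m) ℝ} {N : ℕ} {μ : ℝ}

lemma gramian_mulVec_surjective (hμ : 0 < μ)
    (hM : ∀ w, μ * en w ≤ Real.sqrt (∑ k ∈ Finset.range N, en ((M k)ᵀ *ᵥ w) ^ 2)) :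
    Function.Surjective (gramian M N).mulVec := by
  refine mulVec_surjective_iff_isUnit.2 (mulVec_injective_iff_isUnit.1 fun w w' h => ?_)
  have hker : gramian M N *ᵥ (w - w') = 0 := by rw [mulVec_sub, h, sub_self]
  have hle := hM (w - w')
  rw [← dotProduct_gramian_mulVec, hker, dotProduct_zero, Real.sqrt_zero] at hle
  have hzero : en (w - w') = 0 :=
    le_antisymm (nonpos_of_mul_nonpos_right hle hμ) (en_nonneg _)
  exact sub_eq_zero.1 (en_eq_zero.1 hzero)

lemma exists_sum_mulVec_eq_of_le_sqrt (hμ : 0 < μ)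
    (hM : ∀ w, μ * en w ≤ Real.sqrt (∑ k ∈ Finset.range N, en ((M k)ᵀ *ᵥ w) ^ 2))
    (z : Fin n → ℝ) :
    ∃ c : ℕ → Fin m → ℝ, ∑ k ∈ Finset.range N, M k *ᵥ c k = z ∧
      ∀ k < N, en (c k) ≤ en z / μ := by
  obtain ⟨w, hw⟩ := gramian_mulVec_surjective hμ hM z
  refine ⟨fun k => (M k)ᵀ *ᵥ w, by rw [← hw, gramian_mulVec], fun k hk => ?_⟩
  set s := Real.sqrt (∑ k ∈ Finset.range N, en ((M k)ᵀ *ᵥ w) ^ 2)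
  have hs_sq : s ^ 2 ≤ en w * en z := by
    rw [Real.sq_sqrt (by positivity), ← dotProduct_gramian_mulVec, hw]
    exact dotProduct_le_en_mul_en w z
  have hs : μ * s ≤ en z := by
    have hsz : μ * s * s ≤ s * en z := by
      nlinarith [mul_le_mul_of_nonneg_right (hM w) (en_nonneg z)]
    have hs_nonneg : 0 ≤ s := Real.sqrt_nonneg _
    rcases hs_nonneg.eq_or_lt with hs0 | hs0
    · rw [← hs0, mul_zero]; exact en_nonneg z
    · nlinarith
  rw [le_div_iff₀ hμ, mul_comm]
  exact (mul_le_mul_of_nonneg_left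
    (en_le_sqrt_sum_sq (Finset.mem_range.2 hk) fun k => (M k)ᵀ *ᵥ w) hμ.le).trans hs

end Gramian

section LinearRecurrence

variable {ι κ R : Type*} [Fintype ι] [Fintype κ] [Ring R] {A : Matrix ι ι R} {B : Matrix ι κ R}

lemma eq_pow_mulVec_add_sum_of_forall_succ_eq [DecidableEq ι] {y : ℕ → ι → R} {v : ℕ → κ → R}
    (h : ∀ k, y (k + 1) = A *ᵥ y k + B *ᵥ v k) (k : ℕ) :
    y k = (A ^ k) *ᵥ y 0 + ∑ j ∈ Finset.range k, (A ^ j * B) *ᵥ v (k - 1 - j) := by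
  induction k with
  | zero => simp
  | succ k ih =>
    rw [h, ih, mulVec_add, mulVec_mulVec, ← pow_succ', mulVec_sum, Finset.sum_range_succ',
      pow_zero, Matrix.one_mul, add_assoc, add_tsub_cancel_right, tsub_zero]
    congr 2
    refine Finset.sum_congr rfl fun j _ => ?_
    rw [mulVec_mulVec, ← Matrix.mul_assoc, ← pow_succ', Nat.sub_sub, add_comm 1]

def trajectory (A : Matrix ι ι R) (B : Matrix ι κ R) (e x₀ : ι → R) (u : ℕ → κ → R) :
    ℕ → ι → R
  | 0 => x₀
  | k + 1 => A *ᵥ trajectory A B e x₀ u k + B *ᵥ u k + e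

lemma trajectory_succ_sub {e x₀ xs : ι → R} {us : κ → R} (u : ℕ → κ → R)
    (hss : xs = A *ᵥ xs + B *ᵥ us + e) (k : ℕ) :
    trajectory A B e x₀ u (k + 1) - xs =
      A *ᵥ (trajectory A B e x₀ u k - xs) + B *ᵥ (u k - us) := by
  conv_lhs => rw [hss]
  simp only [trajectory, mulVec_sub]
  abel

end LinearRecurrence

lemma le_one_add_pow_mul_of_forall_lt_le_mul_add {r : ℕ → ℝ} {a b : ℝ} {N : ℕ} (ha : 0 ≤ a)
    (hb : 0 ≤ b) (hr : 0 ≤ r 0) (h : ∀ k < N, r (k + 1) ≤ a * r k + b) :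
    ∀ k ≤ N, r k ≤ (1 + a) ^ k * (r 0 + b) := by
  intro k hk
  induction k with
  | zero => simpa using hb
  | succ k ih =>
    have hpow : 1 ≤ (1 + a) ^ k := one_le_pow₀ (by linarith)
    have ih := ih (by omega)
    calc r (k + 1) ≤ a * r k + b := h k (by omega)
      _ ≤ a * ((1 + a) ^ k * (r 0 + b)) + (1 + a) ^ k * (r 0 + b) := by
          gcongr; nlinarith
      _ = (1 + a) ^ (k + 1) * (r 0 + b) := by ring

section Control

variable {n m : ℕ} {A : Matrix (Fin n) (Fin n) ℝ} {B : Matrix (Fin n) (Fin m) ℝ} {a μ : ℝ}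

lemma exists_inputs_pow_mulVec_add_sum_eq_zero (ha : 0 ≤ a) (hμ : 0 < μ)
    (hA : ∀ v, en (A *ᵥ v) ≤ a * en v)
    (hC : ∀ w, μ * en w ≤ Real.sqrt (∑ k ∈ Finset.range n, en ((A ^ k * B)ᵀ *ᵥ w) ^ 2))
    (y₀ : Fin n → ℝ) :
    ∃ v : ℕ → Fin m → ℝ,
      (A ^ n) *ᵥ y₀ + ∑ j ∈ Finset.range n, (A ^ j * B) *ᵥ v (n - 1 - j) = 0 ∧
      ∀ k < n, en (v k) ≤ a ^ n / μ * en y₀ := by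
  obtain ⟨c, hc_sum, hc_le⟩ :=
    exists_sum_mulVec_eq_of_le_sqrt (M := fun k => A ^ k * B) hμ hC (-((A ^ n) *ᵥ y₀))
  refine ⟨fun k => c (n - 1 - k), ?_, fun k hk => ?_⟩
  · have hreflect : ∀ j ∈ Finset.range n, n - 1 - (n - 1 - j) = j := fun j hj => by
      have := Finset.mem_range.1 hj; omega
    beta_reduce
    rw [Finset.sum_congr rfl fun j hj => by rw [hreflect j hj], hc_sum, add_neg_cancel]
  · calc en (c (n - 1 - k)) ≤ en (-((A ^ n) *ᵥ y₀)) / μ := hc_le _ (by omega)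
      _ ≤ a ^ n * en y₀ / μ := by
          rw [en_neg]; gcongr; exact en_pow_mulVec_le ha hA n y₀
      _ = a ^ n / μ * en y₀ := by ring

lemma en_le_of_forall_succ_eq (ha : 0 ≤ a) (hA : ∀ v, en (A *ᵥ v) ≤ a * en v)
    (hB : ∀ v, en (B *ᵥ v) ≤ a * en v) {y : ℕ → Fin n → ℝ} {v : ℕ → Fin m → ℝ}
    (h : ∀ k, y (k + 1) = A *ᵥ y k + B *ᵥ v k) {N : ℕ} {β : ℝ} (hβ : 0 ≤ β)
    (hv : ∀ k < N, en (v k) ≤ β) :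
    ∀ k ≤ N, en (y k) ≤ (1 + a) ^ N * (en (y 0) + a * β) := by
  have hstep : ∀ k < N, en (y (k + 1)) ≤ a * en (y k) + a * β := fun k hk =>
    calc en (y (k + 1)) ≤ en (A *ᵥ y k) + en (B *ᵥ v k) := h k ▸ en_add_le _ _
      _ ≤ a * en (y k) + a * β := add_le_add (hA _) ((hB _).trans (by gcongr; exact hv k hk))
  intro k hk
  calc en (y k) ≤ (1 + a) ^ k * (en (y 0) + a * β) :=
        le_one_add_pow_mul_of_forall_lt_le_mul_add (r := fun k => en (y k)) ha
          (mul_nonneg ha hβ) (en_nonneg _) hstep k hk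
    _ ≤ (1 + a) ^ N * (en (y 0) + a * β) := by
        gcongr
        · exact add_nonneg (en_nonneg _) (by positivity)
        · linarith

end Control

/-- Uniform controllability bound: if `‖A‖₂ ≤ a`, `‖B‖₂ ≤ a` and the controllability
matrix `[B, AB, …, A^{n−1}B]` has `σ_min ≥ μ` (encoded via its transpose:
`μ‖w‖₂ ≤ ‖[B, AB, …, A^{n−1}B]ᵀ w‖₂` for all `w`), then any steady state `xˢ` of
`x⁺ = Ax + Bu + e` can be reached from any `x₀` in `n` steps with
`Σ_{k<n} (‖x̂_k − xˢ‖₂ + ‖û_k − uˢ‖₂) ≤ Γ‖xˢ − x₀‖₂`, where `Γ` depends only on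
`n`, `m`, `a`, `μ`. -/
theorem stmt9 (n m : ℕ) (hn : 1 ≤ n) (a μ : ℝ) (ha : 0 < a) (hμ : 0 < μ) :
    ∃ Γ : ℝ, 0 < Γ ∧
      ∀ (A : Matrix (Fin n) (Fin n) ℝ) (B : Matrix (Fin n) (Fin m) ℝ),
        (∀ v : Fin n → ℝ, en (A.mulVec v) ≤ a * en v) →
        (∀ v : Fin m → ℝ, en (B.mulVec v) ≤ a * en v) →
        (∀ w : Fin n → ℝ,
          μ * en w ≤ Real.sqrt (∑ k ∈ Finset.range n, en ((A ^ k * B)ᵀ.mulVec w) ^ 2)) →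
        ∀ (e : Fin n → ℝ) (xs : Fin n → ℝ) (us : Fin m → ℝ),
          xs = A.mulVec xs + B.mulVec us + e →
          ∀ x0 : Fin n → ℝ,
            ∃ (uh : ℕ → Fin m → ℝ) (xh : ℕ → Fin n → ℝ),
              xh 0 = x0 ∧
              (∀ k < n, xh (k + 1) = A.mulVec (xh k) + B.mulVec (uh k) + e) ∧
              xh n = xs ∧
              (∑ k ∈ Finset.range n, (en (xh k - xs) + en (uh k - us))) ≤
                Γ * en (xs - x0) := by
  set K : ℝ := (1 + a) ^ n * (1 + a * (a ^ n / μ)) + a ^ n / μ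
  have hn' : (0 : ℝ) < n := by exact_mod_cast hn
  refine ⟨n * K, by positivity, ?_⟩
  intro A B hA hB hC e xs us hss x0
  obtain ⟨v, hv_reach, hv_le⟩ :=
    exists_inputs_pow_mulVec_add_sum_eq_zero ha.le hμ hA hC (x0 - xs)
  set u : ℕ → Fin m → ℝ := fun k => us + v k
  set x := trajectory A B e x0 u
  have hdev : ∀ k, x (k + 1) - xs = A *ᵥ (x k - xs) + B *ᵥ v k := by
    simpa only [u, add_sub_cancel_left] using trajectory_succ_sub u hss
  refine ⟨u, x, rfl, fun k _ => rfl, ?_, ?_⟩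
  · exact sub_eq_zero.1 <|
      (eq_pow_mulVec_add_sum_of_forall_succ_eq (y := fun k => x k - xs) hdev n).trans hv_reach
  have hx := en_le_of_forall_succ_eq (y := fun k => x k - xs) ha.le hA hB hdev
    (mul_nonneg (by positivity) (en_nonneg _)) hv_le
  have hterm : ∀ k ∈ Finset.range n, en (x k - xs) + en (u k - us) ≤ K * en (xs - x0) := by
    intro k hk
    have hk := Finset.mem_range.1 hk
    rw [add_sub_cancel_left, en_sub_comm xs]
    calc en (x k - xs) + en (v k)
        ≤ (1 + a) ^ n * (en (x0 - xs) + a * (a ^ n / μ * en (x0 - xs)))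
          + a ^ n / μ * en (x0 - xs) := add_le_add (hx k hk.le) (hv_le k hk)
      _ = K * en (x0 - xs) := by ring
  calc ∑ k ∈ Finset.range n, (en (x k - xs) + en (u k - us))
      ≤ n • (K * en (xs - x0)) := by
        simpa only [Finset.card_range] using Finset.sum_le_card_nsmul _ _ _ hterm
    _ = n * K * en (xs - x0) := by rw [nsmul_eq_mul, mul_assoc]
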